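/- arXiv:2309.09570 — 4 statements merged into one kernel-verified Lean document; each statement's English description precedes it below -/
import Mathlib

section
/- Let h, h̃, h⁻, h⁺, h̃⁺ : ℤ → ℤ be height functions (all increments in {−1,+1}), and let X ∈ ℤ. Assume: (i) h(y) = min(h⁻(y), h⁺(y)) for all y ∈ ℤ; (ii) h̃(y) = min(h⁻(y), h̃⁺(y)) for all y ∈ ℤ; (iii) h̃⁺(y) ≤ h⁺(y) for all y ∈ ℤ; (iv) h̃(y) = h(y) for all y ≤ X and h̃(y) = h(y) − 2 for all y > X; (v) h⁻(y+1) − h⁻(y) ≥ h̃⁺(y+1) − h̃⁺(y) for all y ∈ ℤ (i.e. the occupation variables satisfy η⁻ ≤ η̃⁺ pointwise); (vi) h⁻(X) = h̃⁺(X). Then for every x ∈ ℤ: x ≤ X if and only if h⁻(x) ≤ h̃⁺(x). -/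
/-- Deterministic (pathwise) skeleton of Theorem 2.1: under
hypotheses (i)–(vi) on the height functions `h, h̃, h⁻, h⁺, h̃⁺` and the second
class particle position `X`, one has `x ≤ X ↔ h⁻(x) ≤ h̃⁺(x)` for every `x`. -/
theorem secondClass_event_identity
    (h ht hm hp htp : ℤ → ℤ) (X : ℤ)
    (h_height : ∀ y : ℤ, |h (y + 1) - h y| = 1)
    (ht_height : ∀ y : ℤ, |ht (y + 1) - ht y| = 1)
    (hm_height : ∀ y : ℤ, |hm (y + 1) - hm y| = 1)
    (hp_height : ∀ y : ℤ, |hp (y + 1) - hp y| = 1)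
    (htp_height : ∀ y : ℤ, |htp (y + 1) - htp y| = 1)
    (h_min : ∀ y : ℤ, h y = min (hm y) (hp y))
    (ht_min : ∀ y : ℤ, ht y = min (hm y) (htp y))
    (htp_le_hp : ∀ y : ℤ, htp y ≤ hp y)
    (h_eq_left : ∀ y : ℤ, y ≤ X → ht y = h y)
    (h_shift_right : ∀ y : ℤ, X < y → ht y = h y - 2)
    (h_order : ∀ y : ℤ, htp (y + 1) - htp y ≤ hm (y + 1) - hm y)
    (h_eq_at_X : hm X = htp X) :
    ∀ x : ℤ, x ≤ X ↔ hm x ≤ htp x := by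
  have monoN : ∀ n : ℕ, ∀ a : ℤ, hm a - htp a ≤ hm (a + n) - htp (a + n) := by
    intro n
    induction n with
    | zero => intro a; simp
    | succ k ih =>
      intro a
      have h1 := ih a
      have h2 := h_order (a + k)
      have : (a : ℤ) + (k + 1 : ℕ) = (a + k) + 1 := by push_cast; ring
      rw [this]
      omega
  have mono : ∀ a b : ℤ, a ≤ b → hm a - htp a ≤ hm b - htp b := by
    intro a b hab
    have := monoN (b - a).toNat a
    rw [Int.toNat_of_nonneg (by omega : (0:ℤ) ≤ b - a)] at this
    have hb : a + (b - a) = b := by ring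
    rwa [hb] at this
  have hX1 : htp (X + 1) < hm (X + 1) := by
    by_contra hc
    push_neg at hc
    have h1 := mono X (X + 1) (by omega)
    have h2 := ht_min (X + 1)
    have h3 := h_min (X + 1)
    have h4 := h_shift_right (X + 1) (by omega)
    have h5 := htp_le_hp (X + 1)
    omega
  intro x
  constructor
  · intro hx
    have := mono x X hx
    omega
  · intro hx
    by_contra hc
    push_neg at hc
    have := mono (X + 1) x (by omega)
    omega
end

section
/- Let (Ω, F, P) be a probability space and let (X_n) and (Y_n) be sequences of real-valued random variables on it such that X_n ≤ Y_n almost surely for every n. Suppose that the laws of X_n and the laws of Y_n both converge weakly, as n → ∞, to the same Borel probability measure μ on ℝ. Then Y_n − X_n converges to 0 in probability: for every ε > 0, P(Y_n − X_n ≥ ε) → 0 as n → ∞. -/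
/-!
For a bounded continuous nondecreasing `G`, the variables `G (Y n) - G (X n)` are almost surely
nonnegative and their means tend to `∫ G dμ - ∫ G dμ = 0`, so by Markov's inequality they tend to
`0` in probability. If `G` is the clamp to `[-(r + ε), r + ε]`, then `ε ≤ Y n - X n` and
`|X n| < r` force `ε ≤ G (Y n) - G (X n)`. By the portmanteau theorem the remaining event
`r ≤ |X n|` has asymptotic probability at most `μ {r ≤ |x|}`, which tends to `0` as `r → ∞`.
-/

open MeasureTheory Filter
open scoped BoundedContinuousFunction Topology

noncomputable def clampBCF (c : ℝ) : ℝ →ᵇ ℝ :=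
  .ofNormedAddCommGroup (fun t => max (-c) (min c t)) (by fun_prop) |c| fun t => by
    rw [Real.norm_eq_abs, abs_le]
    exact ⟨le_max_of_le_left (neg_le_neg (le_abs_self c)),
      max_le (neg_le_abs c) ((min_le_left c t).trans (le_abs_self c))⟩

lemma clampBCF_apply (c t : ℝ) : clampBCF c t = max (-c) (min c t) := rfl

lemma monotone_clampBCF (c : ℝ) : Monotone (clampBCF c) :=
  fun _ _ h => max_le_max le_rfl (min_le_min le_rfl h)

lemma le_clampBCF_sub_clampBCF {r ε x y : ℝ} (hε : 0 ≤ ε) (hx : |x| < r) (hxy : x + ε ≤ y) :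
    ε ≤ clampBCF (r + ε) y - clampBCF (r + ε) x := by
  obtain ⟨hx₁, hx₂⟩ := abs_lt.1 hx
  have h_fix : clampBCF (r + ε) x = x := by
    rw [clampBCF_apply, min_eq_right (by linarith), max_eq_right (by linarith)]
  have h_shift : x + ε ≤ clampBCF (r + ε) y := le_max_of_le_right (le_min (by linarith) hxy)
  linarith

lemma tendsto_measure_norm_ge_atTop {E : Type*} [SeminormedAddCommGroup E] [MeasurableSpace E]
    [OpensMeasurableSpace E] (μ : Measure E) [IsFiniteMeasure μ] :
    Tendsto (fun r : ℝ => μ {x | r ≤ ‖x‖}) atTop (𝓝 0) := by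
  have h := tendsto_measure_iInter_atTop (μ := μ) (s := fun r : ℝ => {x : E | r ≤ ‖x‖})
    (fun _ => (measurableSet_le measurable_const continuous_norm.measurable).nullMeasurableSet)
    (fun _ _ hrr' _ hx => hrr'.trans hx) ⟨0, measure_ne_top μ _⟩
  have h_empty : ⋂ r : ℝ, {x : E | r ≤ ‖x‖} = ∅ :=
    Set.iInter_eq_empty_iff.2 fun x => ⟨‖x‖ + 1, by simp⟩
  rwa [h_empty, measure_empty] at h

section

variable {Ω ι : Type*} [MeasurableSpace Ω] {P : Measure Ω} {l : Filter ι}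

lemma tendsto_measure_le_of_tendsto_integral [IsFiniteMeasure P] {W : ι → Ω → ℝ}
    (hW_nonneg : ∀ i, 0 ≤ᵐ[P] W i) (hW_int : ∀ i, Integrable (W i) P)
    (h : Tendsto (fun i => ∫ ω, W i ω ∂P) l (𝓝 0)) {δ : ℝ} (hδ : 0 < δ) :
    Tendsto (fun i => P {ω | δ ≤ W i ω}) l (𝓝 0) := by
  have h_markov : ∀ i, P.real {ω | δ ≤ W i ω} ≤ (∫ ω, W i ω ∂P) / δ := fun i =>
    (le_div_iff₀' hδ).2 (mul_meas_ge_le_integral_of_nonneg (hW_nonneg i) (hW_int i) δ)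
  have h_real : Tendsto (fun i => P.real {ω | δ ≤ W i ω}) l (𝓝 0) :=
    squeeze_zero (fun _ => measureReal_nonneg) h_markov (by simpa using h.div_const δ)
  simpa [ofReal_measureReal] using ENNReal.tendsto_ofReal h_real

lemma tendsto_measure_le_sub_comp_of_monotone [IsFiniteMeasure P] {X Y : ι → Ω → ℝ}
    (hX_meas : ∀ i, AEMeasurable (X i) P) (hY_meas : ∀ i, AEMeasurable (Y i) P)
    (h_le : ∀ i, X i ≤ᵐ[P] Y i) {G : ℝ →ᵇ ℝ} (hG : Monotone G) {c : ℝ}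
    (hX : Tendsto (fun i => ∫ x, G x ∂(P.map (X i))) l (𝓝 c))
    (hY : Tendsto (fun i => ∫ x, G x ∂(P.map (Y i))) l (𝓝 c)) {δ : ℝ} (hδ : 0 < δ) :
    Tendsto (fun i => P {ω | δ ≤ G (Y i ω) - G (X i ω)}) l (𝓝 0) := by
  have h_int : ∀ {Z : Ω → ℝ}, AEMeasurable Z P → Integrable (fun ω => G (Z ω)) P := fun hZ =>
    (integrable_map_measure G.continuous.aestronglyMeasurable hZ).1 (G.integrable _)
  have h_integral : ∀ i, ∫ ω, G (Y i ω) - G (X i ω) ∂P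
      = ∫ x, G x ∂(P.map (Y i)) - ∫ x, G x ∂(P.map (X i)) := fun i => by
    rw [integral_sub (h_int (hY_meas i)) (h_int (hX_meas i)),
      integral_map (hY_meas i) G.continuous.aestronglyMeasurable,
      integral_map (hX_meas i) G.continuous.aestronglyMeasurable]
  refine tendsto_measure_le_of_tendsto_integral
    (fun i => (h_le i).mono fun ω hω => sub_nonneg.2 (hG hω))
    (fun i => (h_int (hY_meas i)).sub (h_int (hX_meas i))) ?_ hδ
  simpa [h_integral] using hY.sub hX

lemma limsup_measure_preimage_le_of_tendsto_integral {E : Type*} [MeasurableSpace E]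
    [TopologicalSpace E] [OpensMeasurableSpace E] [HasOuterApproxClosed E]
    [IsProbabilityMeasure P] {X : ι → Ω → E} (hX_meas : ∀ i, AEMeasurable (X i) P)
    {μ : Measure E} [IsProbabilityMeasure μ]
    (hX : ∀ f : E →ᵇ ℝ, Tendsto (fun i => ∫ x, f x ∂(P.map (X i))) l (𝓝 (∫ x, f x ∂μ)))
    {F : Set E} (hF : IsClosed F) :
    limsup (fun i => P (X i ⁻¹' F)) l ≤ μ F := by
  let law : ι → ProbabilityMeasure E := fun i =>
    ⟨P.map (X i), Measure.isProbabilityMeasure_map (hX_meas i)⟩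
  have h_lim : Tendsto law l (𝓝 ⟨μ, inferInstance⟩) :=
    ProbabilityMeasure.tendsto_iff_forall_integral_tendsto.2 hX
  have h_preimage : ∀ i, P (X i ⁻¹' F) = (law i : Measure E) F := fun i =>
    (Measure.map_apply_of_aemeasurable (hX_meas i) hF.measurableSet).symm
  simpa only [h_preimage, ProbabilityMeasure.coe_mk] using
    ProbabilityMeasure.limsup_measure_closed_le_of_tendsto h_lim hF

end

/-- If `X n ≤ Y n` almost surely for every `n` and the laws of
`X n` and of `Y n` both converge weakly (tested against bounded continuous
functions) to the same Borel probability measure `μ` on ℝ, then `Y n − X n → 0`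
in probability: for every `ε > 0`, `P(Y n − X n ≥ ε) → 0`. -/
theorem tendsto_zero_of_stochastically_ordered_same_limit
    {Ω : Type*} [MeasurableSpace Ω] (P : Measure Ω) [IsProbabilityMeasure P]
    (X Y : ℕ → Ω → ℝ)
    (hXm : ∀ n, Measurable (X n)) (hYm : ∀ n, Measurable (Y n))
    (h_le : ∀ n, ∀ᵐ ω ∂P, X n ω ≤ Y n ω)
    (μ : Measure ℝ) [IsProbabilityMeasure μ]
    (hX : ∀ f : BoundedContinuousFunction ℝ ℝ,
      Tendsto (fun n => ∫ x, f x ∂(P.map (X n))) atTop (nhds (∫ x, f x ∂μ)))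
    (hY : ∀ f : BoundedContinuousFunction ℝ ℝ,
      Tendsto (fun n => ∫ x, f x ∂(P.map (Y n))) atTop (nhds (∫ x, f x ∂μ))) :
    ∀ ε : ℝ, 0 < ε →
      Tendsto (fun n => P {ω | ε ≤ Y n ω - X n ω}) atTop (nhds 0) := by
  intro ε hε
  have h_bound : ∀ r : ℝ,
      limsup (fun n => P {ω | ε ≤ Y n ω - X n ω}) atTop ≤ μ {x | r ≤ ‖x‖} := by
    intro r
    let A : ℕ → Set Ω := fun n =>
      {ω | ε ≤ clampBCF (r + ε) (Y n ω) - clampBCF (r + ε) (X n ω)}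
    let B : ℕ → Set Ω := fun n => X n ⁻¹' {x | r ≤ ‖x‖}
    have h_cover : ∀ n, {ω | ε ≤ Y n ω - X n ω} ⊆ A n ∪ B n := by
      intro n ω hω
      by_cases h : r ≤ ‖X n ω‖
      · exact Or.inr h
      · rw [not_le, Real.norm_eq_abs] at h
        exact Or.inl (le_clampBCF_sub_clampBCF hε.le h (by linarith [hω.out]))
    have hA : Tendsto (fun n => P (A n)) atTop (𝓝 0) :=
      tendsto_measure_le_sub_comp_of_monotone (fun n => (hXm n).aemeasurable)
        (fun n => (hYm n).aemeasurable) h_le (monotone_clampBCF _) (hX _) (hY _) hε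
    have hB : limsup (fun n => P (B n)) atTop ≤ μ {x | r ≤ ‖x‖} :=
      limsup_measure_preimage_le_of_tendsto_integral (fun n => (hXm n).aemeasurable) hX
        (isClosed_le continuous_const continuous_norm)
    calc limsup (fun n => P {ω | ε ≤ Y n ω - X n ω}) atTop
        ≤ limsup ((fun n => P (A n)) + fun n => P (B n)) atTop :=
          limsup_le_limsup (.of_forall fun n =>
            (measure_mono (h_cover n)).trans (measure_union_le _ _))
      _ = limsup (fun n => P (B n)) atTop := ENNReal.limsup_add_of_left_tendsto_zero hA _
      _ ≤ μ {x | r ≤ ‖x‖} := hB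
  have h_limsup : limsup (fun n => P {ω | ε ≤ Y n ω - X n ω}) atTop ≤ 0 :=
    ge_of_tendsto' (tendsto_measure_norm_ge_atTop μ) h_bound
  exact tendsto_of_le_liminf_of_limsup_le zero_le h_limsup
end

section
/- Let (Ω, F, P) be a probability space, (T_n) a sequence of positive reals with T_n → ∞, and (A_n), (B_n), (C_n) sequences of real-valued random variables on Ω such that A_n ≤ B_n + C_n almost surely for every n. Let μ₁, μ₂ : ℕ → ℝ and let μ be a Borel probability measure on ℝ such that, as n → ∞: the law of (A_n − μ₁(n))/T_n^{1/3} converges weakly to μ; the law of (B_n − μ₂(n))/T_n^{1/3} converges weakly to μ; and (C_n − (μ₁(n) − μ₂(n)))/T_n^{1/3} converges to 0 in probability. Then for every ε > 0, P(|A_n − B_n − (μ₁(n) − μ₂(n))| ≥ ε T_n^{1/3}) → 0 as n → ∞. -/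
/-! Write `X n`, `Y n`, `Z n` for the rescaled `A n`, `B n`, `C n - (μ₁ n - μ₂ n)`. By Slutsky's
theorem `W n = Y n + Z n` has the same limit law `μ` as `X n`, and `X n ≤ W n` almost surely.
For a bounded continuous strictly increasing `g` (e.g. `arctan`), the nonnegative variables
`g (W n) - g (X n)` then have means tending to `0`, hence tend to `0` in probability. Since `X n`
is tight and `g` is uniformly strictly increasing on compact sets, `W n - X n → 0` in probability,
and so does `X n - Y n = (X n - W n) + Z n`. -/

open MeasureTheory Filter Set Topology BoundedContinuousFunction
open scoped ENNReal

theorem IsCompact.exists_pos_le_sub_of_strictMono {K : Set ℝ} (hK : IsCompact K) {g : ℝ → ℝ}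
    (hg : StrictMono g) (hgc : Continuous g) {ε : ℝ} (hε : 0 < ε) :
    ∃ c > 0, ∀ x ∈ K, ∀ y, x + ε ≤ y → c ≤ g y - g x := by
  rcases K.eq_empty_or_nonempty with rfl | hne
  · exact ⟨1, one_pos, by simp⟩
  obtain ⟨x₀, -, hmin⟩ := hK.exists_isMinOn hne
    ((hgc.comp (continuous_add_const ε)).sub hgc).continuousOn
  refine ⟨g (x₀ + ε) - g x₀, sub_pos.2 (hg (lt_add_of_pos_right x₀ hε)), fun x hx y hy => ?_⟩
  calc g (x₀ + ε) - g x₀ ≤ g (x + ε) - g x := hmin hx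
    _ ≤ g y - g x := by gcongr; exact hg.monotone hy

theorem exists_boundedContinuousFunction_strictMono : ∃ g : ℝ →ᵇ ℝ, StrictMono g :=
  ⟨.ofNormedAddCommGroup Real.arctan Real.continuous_arctan (Real.pi / 2) fun x =>
      (abs_lt.2 ⟨Real.neg_pi_div_two_lt_arctan x, Real.arctan_lt_pi_div_two x⟩).le,
    Real.arctan_strictMono⟩

theorem BoundedContinuousFunction.integrable_comp {Ω E : Type*} [MeasurableSpace Ω]
    {P : Measure Ω} [IsFiniteMeasure P] [MeasurableSpace E]
    [TopologicalSpace E] [OpensMeasurableSpace E] (f : E →ᵇ ℝ) {X : Ω → E}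
    (hX : AEMeasurable X P) : Integrable (fun ω => f (X ω)) P :=
  (f.integrable (P.map X)).comp_aemeasurable hX

namespace MeasureTheory

variable {ι Ω : Type*} [MeasurableSpace Ω] {P : Measure Ω} {l : Filter ι}

theorem TendstoInMeasure.add {E : Type*} [SeminormedAddCommGroup E] {f g : ι → Ω → E}
    {f₀ g₀ : Ω → E} (hf : TendstoInMeasure P f l f₀) (hg : TendstoInMeasure P g l g₀) :
    TendstoInMeasure P (f + g) l (f₀ + g₀) := by
  rw [tendstoInMeasure_iff_norm] at *
  intro ε hε
  have hsub : ∀ i, {ω | ε ≤ ‖(f + g) i ω - (f₀ + g₀) ω‖} ⊆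
      {ω | ε / 2 ≤ ‖f i ω - f₀ ω‖} ∪ {ω | ε / 2 ≤ ‖g i ω - g₀ ω‖} := by
    intro i ω hω
    by_contra! h
    simp only [mem_union, mem_ofPred_eq, not_or, not_le] at h hω
    have := norm_add_le (f i ω - f₀ ω) (g i ω - g₀ ω)
    rw [show f i ω - f₀ ω + (g i ω - g₀ ω) = f i ω + g i ω - (f₀ ω + g₀ ω) by abel] at this
    simp only [Pi.add_apply] at hω
    linarith
  refine tendsto_of_tendsto_of_tendsto_of_le_of_le tendsto_const_nhds
    (by simpa using (hf _ (half_pos hε)).add (hg _ (half_pos hε))) (fun _ => zero_le)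
    fun i => (measure_mono (hsub i)).trans (measure_union_le _ _)

theorem tendstoInMeasure_zero_of_tendsto_integral [IsFiniteMeasure P] {f : ι → Ω → ℝ}
    (hf : ∀ i, 0 ≤ᵐ[P] f i) (hint : ∀ i, Integrable (f i) P)
    (h : Tendsto (fun i => ∫ ω, f i ω ∂P) l (𝓝 0)) : TendstoInMeasure P f l 0 := by
  rw [tendstoInMeasure_iff_measureReal_norm]
  intro ε hε
  have hmarkov : ∀ i, P.real {ω | ε ≤ ‖f i ω - 0‖} ≤ (∫ ω, f i ω ∂P) / ε := fun i => by
    rw [le_div_iff₀' hε]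
    calc ε * P.real {ω | ε ≤ ‖f i ω - 0‖} = ε * P.real {ω | ε ≤ ‖f i ω‖} := by simp
      _ ≤ ∫ ω, ‖f i ω‖ ∂P :=
        mul_meas_ge_le_integral_of_nonneg (ae_of_all _ fun _ => norm_nonneg _) (hint i).norm ε
      _ = ∫ ω, f i ω ∂P := integral_congr_ae <| (hf i).mono fun ω hω => Real.norm_of_nonneg hω
  exact tendsto_of_tendsto_of_tendsto_of_le_of_le tendsto_const_nhds
    (by simpa using h.div_const ε) (fun _ => measureReal_nonneg) hmarkov

section Distribution

variable {E Ω' : Type*} [MeasurableSpace E] [MeasurableSpace Ω'] {μ' : Measure Ω'}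
  [IsProbabilityMeasure μ'] [IsProbabilityMeasure P]

theorem tendstoInDistribution_id_of_tendsto_integral [TopologicalSpace E] [OpensMeasurableSpace E]
    {X : ι → Ω → E} (hX : ∀ i, AEMeasurable (X i) P) {ν : Measure E} [IsProbabilityMeasure ν]
    (h : ∀ f : E →ᵇ ℝ, Tendsto (fun i => ∫ x, f x ∂(P.map (X i))) l (𝓝 (∫ x, f x ∂ν))) :
    TendstoInDistribution X l id (fun _ => P) ν where
  forall_aemeasurable := hX
  tendsto := ProbabilityMeasure.tendsto_iff_forall_integral_tendsto.2 (by simpa using h)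

theorem TendstoInDistribution.tendsto_integral_comp [TopologicalSpace E] [OpensMeasurableSpace E]
    {X : ι → Ω → E} {Z : Ω' → E} (h : TendstoInDistribution X l Z (fun _ => P) μ')
    (f : E →ᵇ ℝ) :
    Tendsto (fun i => ∫ ω, f (X i ω) ∂P) l (𝓝 (∫ ω, f (Z ω) ∂μ')) := by
  have := ProbabilityMeasure.tendsto_iff_forall_integral_tendsto.1 h.tendsto f
  simp only [ProbabilityMeasure.coe_mk] at this
  rwa [integral_map h.aemeasurable_limit f.continuous.aestronglyMeasurable,
    funext fun i => integral_map (h.forall_aemeasurable i) f.continuous.aestronglyMeasurable]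
    at this

theorem TendstoInDistribution.exists_measure_lt_norm_le [NormedAddCommGroup E] [CompleteSpace E]
    [SecondCountableTopology E] [BorelSpace E] {X : ℕ → Ω → E} {Z : Ω' → E}
    (h : TendstoInDistribution X atTop Z (fun _ => P) μ') {δ : ℝ≥0∞} (hδ : 0 < δ) :
    ∃ r : ℝ, ∀ n, P {ω | r < ‖X n ω‖} ≤ δ := by
  have htight := isTightMeasureSet_of_isCompact_closure
    (h.tendsto.isCompact_insert_range.closure_of_subset (subset_insert _ _))
  obtain ⟨r, hr⟩ := ((tendsto_measure_norm_gt_of_isTightMeasureSet htight).eventually_le_const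
    hδ).exists
  refine ⟨r, fun n => ?_⟩
  calc P {ω | r < ‖X n ω‖} = P.map (X n) {x | r < ‖x‖} :=
        (Measure.map_apply_of_aemeasurable (h.forall_aemeasurable n)
          (measurableSet_lt measurable_const measurable_norm)).symm
    _ ≤ δ := (le_iSup₂_of_le (P.map (X n)) ⟨_, mem_range_self n, rfl⟩ le_rfl).trans hr

theorem TendstoInDistribution.tendstoInMeasure_sub_of_ae_le {X W : ℕ → Ω → ℝ} {Z : Ω' → ℝ}
    (hX : TendstoInDistribution X atTop Z (fun _ => P) μ')
    (hW : TendstoInDistribution W atTop Z (fun _ => P) μ') (hle : ∀ n, X n ≤ᵐ[P] W n) :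
    TendstoInMeasure P (fun n => X n - W n) atTop 0 := by
  obtain ⟨g, hg⟩ := exists_boundedContinuousFunction_strictMono
  have hgX := fun n => g.integrable_comp (hX.forall_aemeasurable n)
  have hgW := fun n => g.integrable_comp (hW.forall_aemeasurable n)
  have hgap : TendstoInMeasure P (fun n ω => g (W n ω) - g (X n ω)) atTop 0 := by
    refine tendstoInMeasure_zero_of_tendsto_integral
      (fun n => (hle n).mono fun ω hω => sub_nonneg.2 (hg.monotone hω))
      (fun n => (hgW n).sub (hgX n)) ?_
    simpa [integral_sub (hgW _) (hgX _)] using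
      (hW.tendsto_integral_comp g).sub (hX.tendsto_integral_comp g)
  rw [tendstoInMeasure_iff_dist] at hgap ⊢
  intro ε hε
  refine ENNReal.tendsto_nhds_zero.2 fun η hη => ?_
  obtain ⟨r, hr⟩ := hX.exists_measure_lt_norm_le (ENNReal.half_pos hη.ne')
  obtain ⟨c, hc, hgc⟩ :=
    (isCompact_Icc (a := -r) (b := r)).exists_pos_le_sub_of_strictMono hg g.continuous hε
  filter_upwards [ENNReal.tendsto_nhds_zero.1 (hgap c hc) _ (ENNReal.half_pos hη.ne')] with n hn
  have hsub : {ω | ε ≤ dist ((X n - W n) ω) 0} ≤ᵐ[P]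
      ({ω | r < ‖X n ω‖} ∪ {ω | c ≤ dist (g (W n ω) - g (X n ω)) 0} : Set Ω) := by
    filter_upwards [hle n] with ω hω (hmem : ε ≤ dist (X n ω - W n ω) 0)
    change r < ‖X n ω‖ ∨ c ≤ dist (g (W n ω) - g (X n ω)) 0
    simp only [Real.dist_eq, sub_zero, Real.norm_eq_abs] at hmem ⊢
    rw [abs_of_nonpos (sub_nonpos.2 hω)] at hmem
    rw [abs_of_nonneg (sub_nonneg.2 (hg.monotone hω))]
    by_cases hXr : |X n ω| ≤ r
    · exact Or.inr (hgc _ (abs_le.1 hXr) _ (by linarith))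
    · exact Or.inl (not_le.1 hXr)
  calc P {ω | ε ≤ dist ((X n - W n) ω) 0}
      ≤ P {ω | r < ‖X n ω‖} + P {ω | c ≤ dist (g (W n ω) - g (X n ω)) 0} :=
        (measure_mono_ae hsub).trans (measure_union_le _ _)
    _ ≤ η / 2 + η / 2 := add_le_add (hr n) hn
    _ = η := ENNReal.add_halves η

theorem TendstoInDistribution.tendstoInMeasure_sub_of_ae_le_add {X Y Z : ℕ → Ω → ℝ} {L : Ω' → ℝ}
    (hX : TendstoInDistribution X atTop L (fun _ => P) μ')
    (hY : TendstoInDistribution Y atTop L (fun _ => P) μ') (hZ : TendstoInMeasure P Z atTop 0)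
    (hZm : ∀ n, AEMeasurable (Z n) P) (hle : ∀ n, X n ≤ᵐ[P] Y n + Z n) :
    TendstoInMeasure P (fun n => X n - Y n) atTop 0 := by
  have hW : TendstoInDistribution (fun n => Y n + Z n) atTop L (fun _ => P) μ' :=
    (hY.add_of_tendstoInMeasure_const hZ hZm).congr (fun _ => ae_of_all _ fun _ => rfl)
      (ae_of_all _ fun _ => add_zero _)
  exact ((hX.tendstoInMeasure_sub_of_ae_le hW hle).add hZ).congr
    (fun n => ae_of_all _ fun ω => by simp only [Pi.add_apply, Pi.sub_apply]; ring)
    (ae_of_all _ fun _ => add_zero 0)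

end Distribution

end MeasureTheory

theorem slow_decorrelation_general
    {Ω : Type*} [MeasurableSpace Ω] (P : Measure Ω) [IsProbabilityMeasure P]
    (T : ℕ → ℝ) (hTpos : ∀ n, 0 < T n)
    (A B C : ℕ → Ω → ℝ)
    (hAm : ∀ n, Measurable (A n)) (hBm : ∀ n, Measurable (B n))
    (hCm : ∀ n, Measurable (C n))
    (h_le : ∀ n, ∀ᵐ ω ∂P, A n ω ≤ B n ω + C n ω)
    (μ₁ μ₂ : ℕ → ℝ)
    (μ : Measure ℝ) [IsProbabilityMeasure μ]
    (hA : ∀ f : BoundedContinuousFunction ℝ ℝ,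
      Tendsto
        (fun n => ∫ x, f x ∂(P.map (fun ω => (A n ω - μ₁ n) / (T n) ^ ((1:ℝ)/3))))
        atTop (nhds (∫ x, f x ∂μ)))
    (hB : ∀ f : BoundedContinuousFunction ℝ ℝ,
      Tendsto
        (fun n => ∫ x, f x ∂(P.map (fun ω => (B n ω - μ₂ n) / (T n) ^ ((1:ℝ)/3))))
        atTop (nhds (∫ x, f x ∂μ)))
    (hC : ∀ ε : ℝ, 0 < ε →
      Tendsto
        (fun n => P {ω | ε ≤ |(C n ω - (μ₁ n - μ₂ n)) / (T n) ^ ((1:ℝ)/3)|})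
        atTop (nhds 0)) :
    ∀ ε : ℝ, 0 < ε →
      Tendsto
        (fun n => P {ω | ε * (T n) ^ ((1:ℝ)/3) ≤ |A n ω - B n ω - (μ₁ n - μ₂ n)|})
        atTop (nhds 0) := by
  have ht : ∀ n, 0 < T n ^ ((1:ℝ)/3) := fun n => Real.rpow_pos_of_pos (hTpos n) _
  set X : ℕ → Ω → ℝ := fun n ω => (A n ω - μ₁ n) / T n ^ ((1:ℝ)/3)
  set Y : ℕ → Ω → ℝ := fun n ω => (B n ω - μ₂ n) / T n ^ ((1:ℝ)/3)
  set Z : ℕ → Ω → ℝ := fun n ω => (C n ω - (μ₁ n - μ₂ n)) / T n ^ ((1:ℝ)/3)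
  have hX : TendstoInDistribution X atTop id (fun _ => P) μ :=
    tendstoInDistribution_id_of_tendsto_integral
      (fun n => (((hAm n).sub_const _).div_const _).aemeasurable) hA
  have hY : TendstoInDistribution Y atTop id (fun _ => P) μ :=
    tendstoInDistribution_id_of_tendsto_integral
      (fun n => (((hBm n).sub_const _).div_const _).aemeasurable) hB
  have hZ : TendstoInMeasure P Z atTop 0 :=
    tendstoInMeasure_iff_dist.2 fun ε hε => by
      simpa only [Real.dist_eq, Pi.zero_apply, sub_zero] using hC ε hε
  have hle : ∀ n, X n ≤ᵐ[P] Y n + Z n := fun n => (h_le n).mono fun ω hω => by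
    simp only [X, Y, Z, Pi.add_apply]
    rw [← add_div, div_le_div_iff_of_pos_right (ht n)]
    linarith
  have hXY := hX.tendstoInMeasure_sub_of_ae_le_add hY hZ
    (fun n => (((hCm n).sub_const _).div_const _).aemeasurable) hle
  intro ε hε
  convert tendstoInMeasure_iff_dist.1 hXY ε hε using 3 with n
  ext ω
  simp only [mem_ofPred_eq, X, Y, Real.dist_eq, Pi.sub_apply, Pi.zero_apply, sub_zero]
  rw [div_sub_div_same, abs_div, abs_of_pos (ht n), le_div_iff₀ (ht n),
    show A n ω - μ₁ n - (B n ω - μ₂ n) = A n ω - B n ω - (μ₁ n - μ₂ n) by ring]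

/-- Abstract slow decorrelation (Theorem 3.3 of the paper):
if `A n ≤ B n + C n` almost surely, the laws of `(A n − μ₁ n)/T n^{1/3}` and of
`(B n − μ₂ n)/T n^{1/3}` both converge weakly to the same probability measure
`μ`, and `(C n − (μ₁ n − μ₂ n))/T n^{1/3} → 0` in probability, then
`P(|A n − B n − (μ₁ n − μ₂ n)| ≥ ε T n^{1/3}) → 0` for every `ε > 0`. -/
theorem slow_decorrelation
    {Ω : Type*} [MeasurableSpace Ω] (P : Measure Ω) [IsProbabilityMeasure P]
    (T : ℕ → ℝ) (hTpos : ∀ n, 0 < T n) (hT : Tendsto T atTop atTop)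
    (A B C : ℕ → Ω → ℝ)
    (hAm : ∀ n, Measurable (A n)) (hBm : ∀ n, Measurable (B n))
    (hCm : ∀ n, Measurable (C n))
    (h_le : ∀ n, ∀ᵐ ω ∂P, A n ω ≤ B n ω + C n ω)
    (μ₁ μ₂ : ℕ → ℝ)
    (μ : Measure ℝ) [IsProbabilityMeasure μ]
    (hA : ∀ f : BoundedContinuousFunction ℝ ℝ,
      Tendsto
        (fun n => ∫ x, f x ∂(P.map (fun ω => (A n ω - μ₁ n) / (T n) ^ ((1:ℝ)/3))))
        atTop (nhds (∫ x, f x ∂μ)))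
    (hB : ∀ f : BoundedContinuousFunction ℝ ℝ,
      Tendsto
        (fun n => ∫ x, f x ∂(P.map (fun ω => (B n ω - μ₂ n) / (T n) ^ ((1:ℝ)/3))))
        atTop (nhds (∫ x, f x ∂μ)))
    (hC : ∀ ε : ℝ, 0 < ε →
      Tendsto
        (fun n => P {ω | ε ≤ |(C n ω - (μ₁ n - μ₂ n)) / (T n) ^ ((1:ℝ)/3)|})
        atTop (nhds 0)) :
    ∀ ε : ℝ, 0 < ε →
      Tendsto
        (fun n => P {ω | ε * (T n) ^ ((1:ℝ)/3) ≤ |A n ω - B n ω - (μ₁ n - μ₂ n)|})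
        atTop (nhds 0) :=
  slow_decorrelation_general P T hTpos A B C hAm hBm hCm h_le μ₁ μ₂ μ hA hB hC
end

section
/- Fix λ ∈ (0,1) and set χ = λ(1−λ). Fix real numbers ξ_i < ξ_j and u_i, u_j. For t > 0 define integers n_i(t) = ⌊λ² t + λ 2^{5/3} χ^{1/3} ξ_i t^{2/3}⌋, n_j(t) = ⌊λ² t + λ 2^{5/3} χ^{1/3} ξ_j t^{2/3}⌋, x_i(t) = ⌊(1−2λ) t − 2^{5/3} χ^{1/3} ξ_i t^{2/3} − 2^{1/3} χ^{2/3} (u_i/λ) t^{1/3}⌋, x_j(t) = ⌊(1−2λ) t − 2^{5/3} χ^{1/3} ξ_j t^{2/3} − 2^{1/3} χ^{2/3} (u_j/λ) t^{1/3}⌋, and (noting that for all sufficiently large t one has x_i(t) − x_j(t) ≥ n_j(t) − n_i(t) ≥ 1) set Q(t) = (1−λ)^{(n_i(t)−n_j(t)) + (x_i(t)−x_j(t))} · λ^{n_j(t)−n_i(t)} · binom(x_i(t)−x_j(t)−1, n_j(t)−n_i(t)−1). Then lim_{t→∞} (2^{1/3} χ^{2/3} t^{1/3} / λ) · Q(t)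 = exp( −(u_j−u_i)² / (4(ξ_j−ξ_i)) ) / √(4π(ξ_j−ξ_i)). -/
/-!
Write `m = n_j − n_i`, `d = x_i − x_j`, `p = m − 1`, `q = d − m` and `K = p + q`. Then
`Q = λ · C(K, p) λ^p (1−λ)^q`, and under the KPZ scaling `K ~ a t^{2/3}` while `(p − λK) / t^{1/3}`
converges, so the limit is an instance of the local de Moivre–Laplace theorem. For the latter,
Stirling gives `C(K, p) ~ √(K / (2π p q)) K^K / (p^p q^q)`, and
`λ^p (1−λ)^q K^K / (p^p q^q) = exp (−K · KL(p/K ‖ λ))` with the Bernoulli relative entropy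
`KL(λ + ε ‖ λ) ~ ε² / (2λ(1−λ))`; since `(p − λK)/√K → z`, the exponent tends to `−z²/(2λ(1−λ))`.
-/

open Filter

/-- The KPZ-scaled particle index `n(t) = ⌊λ² t + λ 2^{5/3} χ^{1/3} ξ t^{2/3}⌋`,
with `χ = λ(1−λ)` (scaling (A.6) of the paper). -/
noncomputable def nIdx (lam ξ : ℝ) (t : ℝ) : ℤ :=
  ⌊lam ^ 2 * t + lam * 2 ^ ((5:ℝ)/3) * (lam * (1 - lam)) ^ ((1:ℝ)/3) * ξ * t ^ ((2:ℝ)/3)⌋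

/-- The KPZ-scaled space point
`x(t) = ⌊(1−2λ) t − 2^{5/3} χ^{1/3} ξ t^{2/3} − 2^{1/3} χ^{2/3} (u/λ) t^{1/3}⌋`,
with `χ = λ(1−λ)` (scaling (A.6) of the paper). -/
noncomputable def xIdx (lam ξ u : ℝ) (t : ℝ) : ℤ :=
  ⌊(1 - 2 * lam) * t - 2 ^ ((5:ℝ)/3) * (lam * (1 - lam)) ^ ((1:ℝ)/3) * ξ * t ^ ((2:ℝ)/3)
    - 2 ^ ((1:ℝ)/3) * (lam * (1 - lam)) ^ ((2:ℝ)/3) * (u / lam) * t ^ ((1:ℝ)/3)⌋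

/-- The conjugated transition kernel
`Q(t) = (1−λ)^{(n_i−n_j)+(x_i−x_j)} λ^{n_j−n_i} · binom(x_i−x_j−1, n_j−n_i−1)`
of (A.7) of the paper, under the KPZ scaling (A.6). -/
noncomputable def Qkernel (lam ξi ξj ui uj : ℝ) (t : ℝ) : ℝ :=
  (1 - lam) ^ ((nIdx lam ξi t - nIdx lam ξj t) + (xIdx lam ξi ui t - xIdx lam ξj uj t))
    * lam ^ (nIdx lam ξj t - nIdx lam ξi t)
    * ((xIdx lam ξi ui t - xIdx lam ξj uj t - 1).toNat.choose
        (nIdx lam ξj t - nIdx lam ξi t - 1).toNat : ℝ)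

open Topology Real Stirling
open scoped Nat

theorem tendsto_div_sq_of_hasDerivAt {f f' : ℝ → ℝ} {c : ℝ}
    (hf : ∀ᶠ x in 𝓝 0, HasDerivAt f (f' x) x) (hf0 : f 0 = 0) (hf'0 : f' 0 = 0)
    (hf' : HasDerivAt f' c 0) :
    Tendsto (fun x => f x / x ^ 2) (𝓝[≠] 0) (𝓝 (c / 2)) := by
  have hslope : Tendsto (fun x => f' x / (2 * x)) (𝓝[≠] 0) (𝓝 (c / 2)) := by
    refine ((hasDerivAt_iff_tendsto_slope.1 hf').div_const 2).congr fun x => ?_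
    rw [slope_def_field, hf'0]
    ring
  have hcont : ContinuousAt f 0 := (hf.self_of_nhds).continuousAt
  refine HasDerivAt.lhopital_zero_nhdsNE (nhdsWithin_le_nhds hf)
    (Eventually.of_forall fun x => by simpa using hasDerivAt_pow 2 x) ?_ ?_ ?_ hslope
  · filter_upwards [self_mem_nhdsWithin] with x hx
    simpa using hx
  · simpa [hf0] using hcont.tendsto.mono_left nhdsWithin_le_nhds
  · simpa using ((continuous_pow 2).tendsto (0:ℝ)).mono_left nhdsWithin_le_nhds

theorem tendsto_div_of_abs_le {α : Type*} {l : Filter α} {f T : α → ℝ} {C : ℝ}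
    (hf : ∀ᶠ x in l, |f x| ≤ C) (hT : Tendsto T l atTop) :
    Tendsto (fun x => f x / T x) l (𝓝 0) := by
  refine squeeze_zero_norm' ?_ ((tendsto_const_nhds (x := C)).div_atTop hT)
  filter_upwards [hf, hT.eventually_gt_atTop 0] with x hfx hTx
  rw [norm_div, Real.norm_of_nonneg hTx.le]
  exact div_le_div_of_nonneg_right hfx hTx.le

theorem tendsto_div_of_tendsto_sub_mul_div_sqrt {α : Type*} {l : Filter α} {P K : α → ℝ}
    {c z : ℝ} (hK : Tendsto K l atTop)
    (hz : Tendsto (fun x => (P x - c * K x) / √(K x)) l (𝓝 z)) :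
    Tendsto (fun x => P x / K x) l (𝓝 c) := by
  have h := (hz.mul (tendsto_inv_atTop_zero.comp (tendsto_sqrt_atTop.comp hK))).const_add c
  rw [mul_zero, add_zero] at h
  refine h.congr' ?_
  filter_upwards [hK.eventually_gt_atTop 0] with x hx
  simp only [Function.comp_apply]
  field_simp
  rw [sq_sqrt hx.le]
  ring

/-- `KL(Ber(λ + e) ‖ Ber(λ))`, parametrised by the offset `e` from `λ`. -/
noncomputable def bernoulliKL (lam e : ℝ) : ℝ :=
  (lam + e) * (log (lam + e) - log lam) + (1 - lam - e) * (log (1 - lam - e) - log (1 - lam))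

section bernoulliKL

variable {lam : ℝ}

theorem hasDerivAt_bernoulliKL {e : ℝ} (h1 : 0 < lam + e) (h2 : 0 < 1 - lam - e) :
    HasDerivAt (bernoulliKL lam)
      (log (lam + e) - log lam - (log (1 - lam - e) - log (1 - lam))) e := by
  have hA : HasDerivAt (fun x => lam + x) 1 e := (hasDerivAt_id e).const_add lam
  have hB : HasDerivAt (fun x => 1 - lam - x) (-1) e := (hasDerivAt_id e).const_sub (1 - lam)
  exact ((hA.mul ((hA.log h1.ne').sub_const (log lam))).add
    (hB.mul ((hB.log h2.ne').sub_const (log (1 - lam))))).congr_deriv (by field_simp; ring)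

theorem hasDerivAt_log_odds_ratio (h0 : 0 < lam) (h1 : lam < 1) :
    HasDerivAt (fun e => log (lam + e) - log lam - (log (1 - lam - e) - log (1 - lam)))
      (1 / (lam * (1 - lam))) 0 := by
  have hA : HasDerivAt (fun x => lam + x) 1 0 := (hasDerivAt_id 0).const_add lam
  have hB : HasDerivAt (fun x => 1 - lam - x) (-1) 0 := (hasDerivAt_id 0).const_sub (1 - lam)
  have : 1 - lam ≠ 0 := by linarith
  exact (((hA.log (by simpa using h0.ne')).sub_const (log lam)).sub
    ((hB.log (by simpa using this)).sub_const (log (1 - lam)))).congr_deriv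
    (by field_simp; ring)

theorem tendsto_bernoulliKL_div_sq (h0 : 0 < lam) (h1 : lam < 1) :
    Tendsto (fun e => bernoulliKL lam e / e ^ 2) (𝓝[≠] 0) (𝓝 (1 / (2 * (lam * (1 - lam))))) := by
  have hnhds : ∀ᶠ e in 𝓝 (0:ℝ), 0 < lam + e ∧ 0 < 1 - lam - e := by
    filter_upwards [Ioo_mem_nhds (show -lam < 0 by linarith) (show 0 < 1 - lam by linarith)]
      with e he
    constructor <;> linarith [he.1, he.2]
  convert tendsto_div_sq_of_hasDerivAt (hnhds.mono fun e he => hasDerivAt_bernoulliKL he.1 he.2)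
    (by simp [bernoulliKL]) (by simp) (hasDerivAt_log_odds_ratio h0 h1) using 2
  field_simp

theorem tendsto_mul_bernoulliKL {α : Type*} {l : Filter α} {K ε : α → ℝ} {s : ℝ}
    (h0 : 0 < lam) (h1 : lam < 1) (hε : Tendsto ε l (𝓝 0))
    (hKε : Tendsto (fun x => K x * ε x ^ 2) l (𝓝 s)) :
    Tendsto (fun x => K x * bernoulliKL lam (ε x)) l (𝓝 (s / (2 * (lam * (1 - lam))))) := by
  classical
  rw [← mul_one_div]
  -- `ψ` extends `KL(e)/e²` continuously at `0`, so `K·KL(ε) = Kε²·ψ(ε)` holds also where `ε = 0`.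
  set ψ := Function.update (fun e => bernoulliKL lam e / e ^ 2) 0 (1 / (2 * (lam * (1 - lam))))
  have hψ : ContinuousAt ψ 0 := continuousAt_update_same.2 (tendsto_bernoulliKL_div_sq h0 h1)
  have hψ0 : ψ 0 = 1 / (2 * (lam * (1 - lam))) := Function.update_self ..
  refine (hKε.mul (hψ0 ▸ hψ.tendsto.comp hε)).congr fun x => ?_
  rcases eq_or_ne (ε x) 0 with hx | hx
  · simp [hx, bernoulliKL]
  · simp only [Function.comp_apply, ψ, Function.update_of_ne hx]
    field_simp

end bernoulliKL

theorem factorial_eq_stirlingSeq_mul {n : ℕ} (hn : n ≠ 0) :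
    (n ! : ℝ) = stirlingSeq n * (√(2 * n) * (n / exp 1) ^ n) := by
  rw [stirlingSeq, div_mul_cancel₀]
  positivity

theorem choose_add_eq_stirlingSeq {p q : ℕ} (hp : p ≠ 0) (hq : q ≠ 0) :
    ((p + q).choose p : ℝ) = stirlingSeq (p + q) / (stirlingSeq p * stirlingSeq q)
      * (√(2 * (p + q)) / (√(2 * p) * √(2 * q)))
      * (((p : ℝ) + q) ^ (p + q) / ((p : ℝ) ^ p * (q : ℝ) ^ q)) := by
  have hS : ∀ n : ℕ, n ≠ 0 → stirlingSeq n ≠ 0 := fun n hn =>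
    (lt_of_lt_of_le (by positivity) (sqrt_pi_le_stirlingSeq hn)).ne'
  have hSp := hS p hp
  have hSq := hS q hq
  have hSpq := hS (p + q) (by omega)
  rw [Nat.cast_choose ℝ (Nat.le_add_right p q), Nat.add_sub_cancel_left,
    factorial_eq_stirlingSeq_mul (by omega), factorial_eq_stirlingSeq_mul hp,
    factorial_eq_stirlingSeq_mul hq]
  push_cast
  rw [div_pow, div_pow, div_pow, pow_add (exp 1)]
  field_simp

theorem pow_mul_pow_mul_div_eq_exp_bernoulliKL {lam : ℝ} (h0 : 0 < lam) (h1 : lam < 1)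
    {p q : ℕ} (hp : p ≠ 0) (hq : q ≠ 0) :
    lam ^ p * (1 - lam) ^ q * (((p : ℝ) + q) ^ (p + q) / ((p : ℝ) ^ p * (q : ℝ) ^ q))
      = exp (-((p + q) * bernoulliKL lam (p / (p + q) - lam))) := by
  have hp' : (0:ℝ) < p := by positivity
  have hq' : (0:ℝ) < q := by positivity
  have h1' : 0 < 1 - lam := by linarith
  have hK : (0:ℝ) < p + q := by positivity
  rw [← exp_log (by positivity : 0 < lam ^ p * (1 - lam) ^ q
    * (((p : ℝ) + q) ^ (p + q) / ((p : ℝ) ^ p * (q : ℝ) ^ q)))]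
  congr 1
  have e1 : lam + (p / (p + q) - lam) = p / (p + q) := by ring
  have e2 : 1 - lam - (p / (p + q) - lam) = q / (p + q) := by field_simp; ring
  rw [bernoulliKL, e1, e2, log_div hp'.ne' hK.ne', log_div hq'.ne' hK.ne',
    log_mul (by positivity) (by positivity), log_mul (by positivity) (by positivity),
    log_div (by positivity) (by positivity), log_mul (by positivity) (by positivity)]
  simp only [log_pow]
  field_simp
  push_cast
  ring

theorem sqrt_mul_choose_mul_pow_eq {lam : ℝ} (h0 : 0 < lam) (h1 : lam < 1) {p q : ℕ}
    (hp : p ≠ 0) (hq : q ≠ 0) :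
    √((p : ℝ) + q) * ((p + q).choose p * lam ^ p * (1 - lam) ^ q)
      = stirlingSeq (p + q) / (stirlingSeq p * stirlingSeq q)
        * (√(2 * ((p : ℝ) / (p + q) * (q / (p + q)))))⁻¹
        * exp (-((p + q) * bernoulliKL lam (p / (p + q) - lam))) := by
  have hp' : (0:ℝ) < p := by positivity
  have hq' : (0:ℝ) < q := by positivity
  have hsqrt : √((p : ℝ) + q) * (√(2 * (p + q)) / (√(2 * p) * √(2 * q)))
      = (√(2 * ((p : ℝ) / (p + q) * (q / (p + q)))))⁻¹ := by
    rw [← sqrt_mul (by positivity : (0:ℝ) ≤ 2 * p), ← sqrt_div' _ (by positivity),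
      ← sqrt_mul (by positivity), ← sqrt_inv]
    congr 1
    field_simp
  rw [← hsqrt, choose_add_eq_stirlingSeq hp hq,
    ← pow_mul_pow_mul_div_eq_exp_bernoulliKL h0 h1 hp hq]
  ring

theorem tendsto_sqrt_mul_choose_mul_pow {α : Type*} {l : Filter α} {p q : α → ℕ} {lam z : ℝ}
    (h0 : 0 < lam) (h1 : lam < 1) (hK : Tendsto (fun x => (p x : ℝ) + q x) l atTop)
    (hz : Tendsto (fun x => ((p x : ℝ) - lam * (p x + q x)) / √((p x : ℝ) + q x)) l (𝓝 z)) :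
    Tendsto
      (fun x => √((p x : ℝ) + q x) * ((p x + q x).choose (p x) * lam ^ p x * (1 - lam) ^ q x))
      l (𝓝 (exp (-z ^ 2 / (2 * (lam * (1 - lam)))) / √(2 * π * (lam * (1 - lam))))) := by
  have hKpos : ∀ᶠ x in l, 0 < (p x : ℝ) + q x := hK.eventually_gt_atTop 0
  have hp := tendsto_div_of_tendsto_sub_mul_div_sqrt hK hz
  have hq : Tendsto (fun x => (q x : ℝ) / (p x + q x)) l (𝓝 (1 - lam)) := by
    refine (hp.const_sub 1).congr' ?_
    filter_upwards [hKpos] with x hx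
    field_simp
    ring
  have hpN : Tendsto p l atTop := by
    refine tendsto_natCast_atTop_iff.1 ((hp.pos_mul_atTop h0 hK).congr' ?_)
    filter_upwards [hKpos] with x hx
    field_simp
  have hqN : Tendsto q l atTop := by
    refine tendsto_natCast_atTop_iff.1 ((hq.pos_mul_atTop (by linarith) hK).congr' ?_)
    filter_upwards [hKpos] with x hx
    field_simp
  have hstirling := (tendsto_stirlingSeq_sqrt_pi.comp (hpN.atTop_add_atTop hqN)).div
    ((tendsto_stirlingSeq_sqrt_pi.comp hpN).mul (tendsto_stirlingSeq_sqrt_pi.comp hqN))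
    (by positivity)
  have hprefactor := (((hp.mul hq).const_mul 2).sqrt).inv₀ (by positivity)
  have hKε : Tendsto (fun x => ((p x : ℝ) + q x) * ((p x : ℝ) / (p x + q x) - lam) ^ 2) l
      (𝓝 (z ^ 2)) := by
    refine (hz.pow 2).congr' ?_
    filter_upwards [hKpos] with x hx
    field_simp
    rw [sq_sqrt hx.le]
    ring
  have hentropy := (tendsto_mul_bernoulliKL h0 h1 (by simpa using hp.sub_const lam) hKε).neg.rexp
  refine ((hstirling.mul hprefactor).mul hentropy).congr' ?_ |>.trans_eq ?_
  · filter_upwards [hpN.eventually_ne_atTop 0, hqN.eventually_ne_atTop 0] with x hpx hqx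
    rw [sqrt_mul_choose_mul_pow_eq h0 h1 hpx hqx]
    rfl
  · have hsplit : √(2 * π * (lam * (1 - lam))) = √π * √(2 * (lam * (1 - lam))) := by
      rw [← sqrt_mul pi_pos.le]
      ring_nf
    have hπ : √π ≠ 0 := (sqrt_pos.2 pi_pos).ne'
    rw [hsplit]
    field_simp

theorem tendsto_mul_choose_mul_pow_of_scaling {α : Type*} {l : Filter α} {p q : α → ℕ}
    {T : α → ℝ} {lam a w : ℝ} (h0 : 0 < lam) (h1 : lam < 1) (ha : 0 < a)
    (hT : Tendsto T l atTop) (hK : Tendsto (fun x => ((p x : ℝ) + q x) / T x ^ 2) l (𝓝 a))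
    (hw : Tendsto (fun x => ((p x : ℝ) - lam * (p x + q x)) / T x) l (𝓝 w)) :
    Tendsto (fun x => T x * ((p x + q x).choose (p x) * lam ^ p x * (1 - lam) ^ q x)) l
      (𝓝 (exp (-w ^ 2 / (2 * (lam * (1 - lam)) * a)) / √(2 * π * (lam * (1 - lam)) * a))) := by
  have hTpos : ∀ᶠ x in l, 0 < T x := hT.eventually_gt_atTop 0
  have hsqrtK : Tendsto (fun x => √((p x : ℝ) + q x) / T x) l (𝓝 √a) := by
    refine hK.sqrt.congr' ?_
    filter_upwards [hTpos] with x hx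
    rw [sqrt_div' _ (sq_nonneg _), sqrt_sq hx.le]
  have hKtop : Tendsto (fun x => (p x : ℝ) + q x) l atTop := by
    refine (hK.pos_mul_atTop ha ((tendsto_pow_atTop two_ne_zero).comp hT)).congr' ?_
    filter_upwards [hTpos] with x hx
    simp only [Function.comp_apply]
    field_simp
  have hz : Tendsto (fun x => ((p x : ℝ) - lam * (p x + q x)) / √((p x : ℝ) + q x)) l
      (𝓝 (w / √a)) := by
    refine (hw.div hsqrtK (sqrt_pos.2 ha).ne').congr' ?_
    filter_upwards [hTpos] with x hx
    simp only [Pi.div_apply]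
    field_simp
  refine ((hsqrtK.inv₀ (sqrt_pos.2 ha).ne').mul
    (tendsto_sqrt_mul_choose_mul_pow h0 h1 hKtop hz)).congr' ?_ |>.trans_eq ?_
  · filter_upwards [hTpos, hKtop.eventually_gt_atTop 0] with x hx hKx
    field_simp
  · rw [div_pow, sq_sqrt ha.le, sqrt_mul (by positivity) a]
    field_simp

theorem eventually_one_le_and_le_of_scaling {α : Type*} {l : Filter α} {m d : α → ℤ}
    {T : α → ℝ} {lam a w : ℝ} (h0 : 0 < lam) (h1 : lam < 1) (ha : 0 < a)
    (hT : Tendsto T l atTop) (hK : Tendsto (fun x => ((d x : ℝ) - 1) / T x ^ 2) l (𝓝 a))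
    (hw : Tendsto (fun x => ((m x : ℝ) - 1 - lam * (d x - 1)) / T x) l (𝓝 w)) :
    ∀ᶠ x in l, 1 ≤ m x ∧ m x ≤ d x := by
  have hTpos : ∀ᶠ x in l, 0 < T x := hT.eventually_gt_atTop 0
  have hP : Tendsto (fun x => ((m x : ℝ) - 1) / T x ^ 2) l (𝓝 (lam * a)) := by
    have h := (hK.const_mul lam).add (hw.mul (tendsto_inv_atTop_zero.comp hT))
    rw [mul_zero, add_zero] at h
    refine h.congr' ?_
    filter_upwards [hTpos] with x hx
    simp only [Function.comp_apply]
    field_simp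
    ring
  have hQ : Tendsto (fun x => ((d x : ℝ) - m x) / T x ^ 2) l (𝓝 (a - lam * a)) := by
    refine (hK.sub hP).congr' ?_
    filter_upwards [hTpos] with x hx
    field_simp
    ring
  have hQlim : 0 < a - lam * a := by nlinarith
  filter_upwards [hP.eventually_const_lt (by positivity), hQ.eventually_const_lt hQlim, hTpos]
    with x hPx hQx hx
  have hm1 : (1 : ℝ) < m x := by linarith [(div_pos_iff_of_pos_right (by positivity)).1 hPx]
  have hmd : (m x : ℝ) < d x := by linarith [(div_pos_iff_of_pos_right (by positivity)).1 hQx]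
  exact ⟨by exact_mod_cast hm1.le, by exact_mod_cast hmd.le⟩

theorem tendsto_mul_zpow_mul_choose_toNat {α : Type*} {l : Filter α} {m d : α → ℤ}
    {T : α → ℝ} {lam a w : ℝ} (h0 : 0 < lam) (h1 : lam < 1) (ha : 0 < a)
    (hT : Tendsto T l atTop) (hK : Tendsto (fun x => ((d x : ℝ) - 1) / T x ^ 2) l (𝓝 a))
    (hw : Tendsto (fun x => ((m x : ℝ) - 1 - lam * (d x - 1)) / T x) l (𝓝 w)) :
    Tendsto (fun x => T x * ((1 - lam) ^ (d x - m x) * lam ^ m x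
        * ((d x - 1).toNat.choose (m x - 1).toNat : ℝ))) l
      (𝓝 (lam * (exp (-w ^ 2 / (2 * (lam * (1 - lam)) * a))
        / √(2 * π * (lam * (1 - lam)) * a)))) := by
  have hev := eventually_one_le_and_le_of_scaling h0 h1 ha hT hK hw
  have hcast : ∀ᶠ x in l,
      ((m x - 1).toNat : ℝ) = m x - 1 ∧ ((d x - m x).toNat : ℝ) = d x - m x := by
    filter_upwards [hev] with x hx
    constructor <;> rw [← Int.cast_natCast, Int.toNat_of_nonneg (by omega)] <;> push_cast <;> ring
  have hlim := tendsto_mul_choose_mul_pow_of_scaling (p := fun x => (m x - 1).toNat)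
    (q := fun x => (d x - m x).toNat) (w := w) h0 h1 ha hT ?_ ?_
  · refine (hlim.const_mul lam).congr' ?_
    filter_upwards [hev] with x hx
    obtain ⟨p, hp⟩ := Int.eq_ofNat_of_zero_le (by omega : 0 ≤ m x - 1)
    obtain ⟨q, hq⟩ := Int.eq_ofNat_of_zero_le (by omega : 0 ≤ d x - m x)
    have hd1 : d x - 1 = ((p + q : ℕ) : ℤ) := by push_cast; omega
    have hm : m x = ((p + 1 : ℕ) : ℤ) := by push_cast; omega
    rw [hq, hd1, hp, hm, Int.toNat_natCast, Int.toNat_natCast, Int.toNat_natCast, zpow_natCast,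
      zpow_natCast, pow_succ]
    ring
  · refine hK.congr' ?_
    filter_upwards [hcast] with x hx
    rw [hx.1, hx.2]
    ring
  · refine hw.congr' ?_
    filter_upwards [hcast] with x hx
    rw [hx.1, hx.2]
    ring

theorem tendsto_mul_zpow_mul_choose_toNat_of_abs_sub_le {α : Type*} {l : Filter α}
    {m d : α → ℤ} {T : α → ℝ} {lam a b C : ℝ} (h0 : 0 < lam) (h1 : lam < 1) (ha : 0 < a)
    (hT : Tendsto T l atTop) (hm : ∀ᶠ x in l, |(m x : ℝ) - lam * a * T x ^ 2| ≤ C)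
    (hd : ∀ᶠ x in l, |(d x : ℝ) - (a * T x ^ 2 + b * T x)| ≤ C) :
    Tendsto (fun x => T x * ((1 - lam) ^ (d x - m x) * lam ^ m x
        * ((d x - 1).toNat.choose (m x - 1).toNat : ℝ))) l
      (𝓝 (lam * (exp (-(lam * b) ^ 2 / (2 * (lam * (1 - lam)) * a))
        / √(2 * π * (lam * (1 - lam)) * a)))) := by
  have hTpos : ∀ᶠ x in l, 0 < T x := hT.eventually_gt_atTop 0
  have hTinv : Tendsto (fun x => (T x)⁻¹) l (𝓝 0) := tendsto_inv_atTop_zero.comp hT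
  have hmT := tendsto_div_of_abs_le hm hT
  have hdT := tendsto_div_of_abs_le hd hT
  have hK : Tendsto (fun x => ((d x : ℝ) - 1) / T x ^ 2) l (𝓝 a) := by
    have h := (((hdT.add_const b).mul hTinv).sub
      (tendsto_inv_atTop_zero.comp ((tendsto_pow_atTop two_ne_zero).comp hT))).const_add a
    rw [mul_zero, sub_zero, add_zero] at h
    refine h.congr' ?_
    filter_upwards [hTpos] with x hx
    simp only [Function.comp_apply]
    field_simp
    ring
  have hw : Tendsto (fun x => ((m x : ℝ) - 1 - lam * (d x - 1)) / T x) l (𝓝 (-(lam * b))) := by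
    have h := ((hmT.sub (hdT.const_mul lam)).add (hTinv.const_mul (lam - 1))).sub_const (lam * b)
    rw [mul_zero, mul_zero, sub_zero, add_zero, zero_sub] at h
    refine h.congr' ?_
    filter_upwards [hTpos] with x hx
    field_simp
    ring
  simpa only [neg_sq] using tendsto_mul_zpow_mul_choose_toNat h0 h1 ha hT hK hw

theorem abs_floor_sub_floor_sub_le_one_of_sub_eq {R : Type*} [CommRing R] [LinearOrder R]
    [IsStrictOrderedRing R] [FloorRing R] {x y c : R} (h : x - y = c) :
    |((⌊x⌋ - ⌊y⌋ : ℤ) : R) - c| ≤ 1 := by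
  rw [← h, abs_le]
  push_cast
  constructor <;> linarith [Int.floor_le x, Int.lt_floor_add_one x, Int.floor_le y,
    Int.lt_floor_add_one y]

theorem rpow_natCast_div_three {x : ℝ} (hx : 0 ≤ x) (k : ℕ) :
    x ^ ((k : ℝ) / 3) = (x ^ ((1 : ℝ) / 3)) ^ k := by
  rw [← rpow_natCast, ← rpow_mul hx]
  ring_nf

theorem abs_nIdx_sub_nIdx_sub_le (lam ξi ξj : ℝ) {t : ℝ} (ht : 0 ≤ t) :
    |((nIdx lam ξj t - nIdx lam ξi t : ℤ) : ℝ)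
      - lam * (2 ^ ((5:ℝ)/3) * (lam * (1 - lam)) ^ ((1:ℝ)/3) * (ξj - ξi)) * (t ^ ((1:ℝ)/3)) ^ 2|
      ≤ 1 := by
  rw [← rpow_natCast_div_three ht 2, Nat.cast_ofNat]
  exact abs_floor_sub_floor_sub_le_one_of_sub_eq (by ring)

theorem abs_xIdx_sub_xIdx_sub_le (lam ξi ξj ui uj : ℝ) {t : ℝ} (ht : 0 ≤ t) :
    |((xIdx lam ξi ui t - xIdx lam ξj uj t : ℤ) : ℝ)
      - (2 ^ ((5:ℝ)/3) * (lam * (1 - lam)) ^ ((1:ℝ)/3) * (ξj - ξi) * (t ^ ((1:ℝ)/3)) ^ 2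
        + 2 ^ ((1:ℝ)/3) * (lam * (1 - lam)) ^ ((2:ℝ)/3) * (uj - ui) / lam * t ^ ((1:ℝ)/3))|
      ≤ 1 := by
  rw [← rpow_natCast_div_three ht 2, Nat.cast_ofNat]
  exact abs_floor_sub_floor_sub_le_one_of_sub_eq (by ring)

theorem Qkernel_eq (lam ξi ξj ui uj t : ℝ) :
    Qkernel lam ξi ξj ui uj t
      = (1 - lam) ^ ((xIdx lam ξi ui t - xIdx lam ξj uj t) - (nIdx lam ξj t - nIdx lam ξi t))
        * lam ^ (nIdx lam ξj t - nIdx lam ξi t)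
        * ((xIdx lam ξi ui t - xIdx lam ξj uj t - 1).toNat.choose
            (nIdx lam ξj t - nIdx lam ξi t - 1).toNat : ℝ) := by
  rw [Qkernel]
  ring_nf

theorem mul_rpow_five_thirds_eq_two_mul_sq {x : ℝ} (hx : 0 ≤ x) :
    x * (2 ^ ((5:ℝ)/3) * x ^ ((1:ℝ)/3)) = 2 * (2 ^ ((1:ℝ)/3) * x ^ ((2:ℝ)/3)) ^ 2 := by
  have hx3 : (x ^ ((1:ℝ)/3)) ^ 3 = x := by rw [← rpow_natCast_div_three hx 3]; norm_num
  have h23 : ((2 : ℝ) ^ ((1:ℝ)/3)) ^ 3 = 2 := by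
    rw [← rpow_natCast_div_three zero_le_two 3]; norm_num
  rw [show (5:ℝ)/3 = ((5:ℕ):ℝ)/3 by norm_num, show (2:ℝ)/3 = ((2:ℕ):ℝ)/3 by norm_num,
    rpow_natCast_div_three zero_le_two, rpow_natCast_div_three hx]
  linear_combination (-((2 : ℝ) ^ ((1:ℝ)/3)) ^ 5 * x ^ ((1:ℝ)/3)) * hx3
    + ((2 : ℝ) ^ ((1:ℝ)/3)) ^ 2 * (x ^ ((1:ℝ)/3)) ^ 4 * h23

/-- Lemma A.2 of the paper. Under the KPZ scaling, the
conjugated transition kernel converges to the Gaussian heat kernel with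
diffusion time `ξ_j − ξ_i`:
`lim_{t→∞} (2^{1/3} χ^{2/3} t^{1/3} / λ) Q(t)
  = e^{−(u_j−u_i)²/(4(ξ_j−ξ_i))} / √(4π(ξ_j−ξ_i))`. -/
theorem Qkernel_limit
    (lam : ℝ) (hlam0 : 0 < lam) (hlam1 : lam < 1)
    (ξi ξj ui uj : ℝ) (hξ : ξi < ξj) :
    Tendsto
      (fun t : ℝ =>
        2 ^ ((1:ℝ)/3) * (lam * (1 - lam)) ^ ((2:ℝ)/3) * t ^ ((1:ℝ)/3) / lam
          * Qkernel lam ξi ξj ui uj t)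
      atTop
      (nhds (Real.exp (-(uj - ui) ^ 2 / (4 * (ξj - ξi)))
        / Real.sqrt (4 * Real.pi * (ξj - ξi)))) := by
  have hχ : 0 < lam * (1 - lam) := mul_pos hlam0 (sub_pos.2 hlam1)
  have hΔ : 0 < ξj - ξi := sub_pos.2 hξ
  have hs : 0 < (2:ℝ) ^ ((1:ℝ)/3) * (lam * (1 - lam)) ^ ((2:ℝ)/3) := by positivity
  have hscale := mul_rpow_five_thirds_eq_two_mul_sq hχ.le
  have hlim := (tendsto_mul_zpow_mul_choose_toNat_of_abs_sub_le hlam0 hlam1 (by positivity)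
    (tendsto_rpow_atTop (by norm_num : (0:ℝ) < 1/3))
    ((eventually_ge_atTop 0).mono fun t ht => abs_nIdx_sub_nIdx_sub_le lam ξi ξj ht)
    ((eventually_ge_atTop 0).mono fun t ht => abs_xIdx_sub_xIdx_sub_le lam ξi ξj ui uj ht))
    |>.const_mul (2 ^ ((1:ℝ)/3) * (lam * (1 - lam)) ^ ((2:ℝ)/3) / lam)
  convert hlim using 2 with t
  · rw [Qkernel_eq]
    ring
  · set χ := lam * (1 - lam)
    set s := (2:ℝ) ^ ((1:ℝ)/3) * χ ^ ((2:ℝ)/3)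
    set A := (2:ℝ) ^ ((5:ℝ)/3) * χ ^ ((1:ℝ)/3)
    rw [show 2 * χ * (A * (ξj - ξi)) = 4 * s ^ 2 * (ξj - ξi) by
        linear_combination 2 * (ξj - ξi) * hscale,
      show 2 * π * χ * (A * (ξj - ξi)) = s ^ 2 * (4 * π * (ξj - ξi)) by
        linear_combination 2 * π * (ξj - ξi) * hscale,
      sqrt_mul (sq_nonneg s), sqrt_sq hs.le]
    field_simp
end
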